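/- arXiv:2406.15397 — 3 statements merged into one kernel-verified Lean document; each statement's English description precedes it below -/
import Mathlib

section
/- Let A_k, A ⊂ ℝ^N be nonempty compact sets with d_H(A_k, A) → 0 (Hausdorff distance), and suppose each A_k and A are contained in a fixed closed ball B̄(0, R). Suppose furthermore that all sets A_k and A have at most one connected component meeting any ball of radius δ/2, for a uniform δ > 0. Then for all sufficiently large k there is a bijection between the connected components of A_k and those of A matching each component of A_k to a component of A within Hausdorff distance d_H(A_k, A) + δ/4. -/
open Set Metric

/-- The set of connected components of a set B. -/
def comps {E : Type*} [TopologicalSpace E] (B : Set E) : Set (Set E) :=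
  {C | ∃ x ∈ B, C = connectedComponentIn B x}

/-!
Fix `ε < r` and sets `S`, `T` each of whose points is `ε`-close to a point of the other, with at
most one component of either set meeting any ball of radius `r`. Sending a point of a component
`C` of `S` to the component of `T` containing an `ε`-close point does not depend on the choice of
that close point, and it is locally constant along `C` (points of `C` within `r - ε` of each other
are sent to components meeting a common `r`-ball), hence constant on the preconnected set `C`.
Doing the same from `T` to `S` gives the inverse map, and matched components are `ε`-close in
Hausdorff distance. Here `ε = d_H(A k, A')`, which is attained on compact sets and is eventually
less than `δ / 4 < δ / 2`.
-/

section ComponentMatching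

variable {E : Type*} [PseudoMetricSpace E]

def ComponentsSeparated (T : Set E) (r : ℝ) : Prop :=
  ∀ C ∈ comps T, ∀ C' ∈ comps T, ∀ z,
    (C ∩ ball z r).Nonempty → (C' ∩ ball z r).Nonempty → C = C'

lemma subset_of_mem_comps {S C : Set E} (hC : C ∈ comps S) : C ⊆ S := by
  obtain ⟨a, -, rfl⟩ := hC
  exact connectedComponentIn_subset S a

lemma eq_of_mem_comps_of_mem {S C D : Set E} (hC : C ∈ comps S) (hD : D ∈ comps S) {x : E}
    (hxC : x ∈ C) (hxD : x ∈ D) : C = D := by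
  obtain ⟨a, -, rfl⟩ := hC
  obtain ⟨b, -, rfl⟩ := hD
  rw [connectedComponentIn_eq hxC, connectedComponentIn_eq hxD]

lemma ComponentsSeparated.connectedComponentIn_eq {T : Set E} {r : ℝ}
    (hT : ComponentsSeparated T r) {y y' z : E} (hy : y ∈ T) (hy' : y' ∈ T)
    (hzy : dist z y < r) (hzy' : dist z y' < r) :
    connectedComponentIn T y = connectedComponentIn T y' :=
  hT _ ⟨y, hy, rfl⟩ _ ⟨y', hy', rfl⟩ z
    ⟨y, mem_connectedComponentIn hy, mem_ball'.2 hzy⟩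
    ⟨y', mem_connectedComponentIn hy', mem_ball'.2 hzy'⟩

lemma ComponentsSeparated.connectedComponentIn_eq_of_isPreconnected {C T : Set E} {r ε : ℝ}
    (hT : ComponentsSeparated T r) (hε : ε < r) (hC : IsPreconnected C)
    (hCT : ∀ x ∈ C, ∃ y ∈ T, dist x y ≤ ε) {x x' y y' : E} (hx : x ∈ C) (hx' : x' ∈ C)
    (hy : y ∈ T) (hy' : y' ∈ T) (hxy : dist x y ≤ ε) (hxy' : dist x' y' ≤ ε) :
    connectedComponentIn T y = connectedComponentIn T y' := by
  let P : E → E → Prop := fun a b => ∀ y ∈ T, ∀ y' ∈ T, dist a y ≤ ε → dist b y' ≤ ε →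
    connectedComponentIn T y = connectedComponentIn T y'
  have hP_of_dist_lt : ∀ a b, dist b a < r - ε → P a b := by
    intro a b hab y hy y' hy' hay hby'
    refine hT.connectedComponentIn_eq hy hy' (hay.trans_lt hε) ?_
    linarith [dist_triangle_left a y' b]
  have hP_local : ∀ a ∈ C, ∀ᶠ b in nhdsWithin a C, P a b ∧ P b a := by
    intro a _
    filter_upwards [mem_nhdsWithin_of_mem_nhds (ball_mem_nhds a (sub_pos.2 hε))] with b hb
    refine ⟨hP_of_dist_lt a b hb, fun y hy y' hy' hby hay' => ?_⟩
    exact (hP_of_dist_lt a b hb y' hy' y hy hay' hby).symm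
  have hP_trans : ∀ a b c, a ∈ C → b ∈ C → c ∈ C → P a b → P b c → P a c := by
    intro a b c _ hb _ hab hbc y hy y' hy' hay hcy'
    obtain ⟨z, hz, hbz⟩ := hCT b hb
    exact (hab y hy z hz hay hbz).trans (hbc z hz y' hy' hbz hcy')
  exact hC.induction₂' P hP_local hP_trans hx hx' y hy y' hy' hxy hxy'

lemma ComponentsSeparated.exists_mem_comps_forall_dist_le_mem {S T C : Set E} {r ε : ℝ}
    (hT : ComponentsSeparated T r) (hε : ε < r) (hST : ∀ x ∈ S, ∃ y ∈ T, dist x y ≤ ε)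
    (hC : C ∈ comps S) :
    ∃ D ∈ comps T, ∀ x ∈ C, ∀ y ∈ T, dist x y ≤ ε → y ∈ D := by
  obtain ⟨a, ha, rfl⟩ := hC
  obtain ⟨b, hb, hab⟩ := hST a ha
  refine ⟨connectedComponentIn T b, ⟨b, hb, rfl⟩, fun x hx y hy hxy => ?_⟩
  rw [hT.connectedComponentIn_eq_of_isPreconnected hε isPreconnected_connectedComponentIn
    (fun x hx => hST x (connectedComponentIn_subset S a hx)) (mem_connectedComponentIn ha) hx
    hb hy hab hxy]
  exact mem_connectedComponentIn hy

lemma eq_of_forall_dist_le_mem {S T C C' D : Set E} {ε : ℝ}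
    (hST : ∀ x ∈ S, ∃ y ∈ T, dist x y ≤ ε) (hC : C ∈ comps S) (hC' : C' ∈ comps S)
    (hCD : ∀ x ∈ C, ∀ y ∈ T, dist x y ≤ ε → y ∈ D)
    (hDC' : ∀ y ∈ D, ∀ x ∈ S, dist y x ≤ ε → x ∈ C') : C' = C := by
  obtain ⟨a, ha, rfl⟩ := hC
  obtain ⟨b, hb, hab⟩ := hST a ha
  have haC : a ∈ connectedComponentIn S a := mem_connectedComponentIn ha
  have haC' : a ∈ C' := hDC' b (hCD a haC b hb hab) a ha (by rwa [dist_comm])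
  exact eq_of_mem_comps_of_mem hC' ⟨a, ha, rfl⟩ haC' haC

theorem exists_equiv_comps_hausdorffDist_le {S T : Set E} {r ε : ℝ}
    (hS : ComponentsSeparated S r) (hT : ComponentsSeparated T r) (hε0 : 0 ≤ ε) (hε : ε < r)
    (hST : ∀ x ∈ S, ∃ y ∈ T, dist x y ≤ ε) (hTS : ∀ y ∈ T, ∃ x ∈ S, dist y x ≤ ε) :
    ∃ e : comps S ≃ comps T, ∀ C : comps S, hausdorffDist (C : Set E) (e C) ≤ ε := by
  choose f hf_mem hf using fun C : comps S =>
    hT.exists_mem_comps_forall_dist_le_mem hε hST C.2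
  choose g hg_mem hg using fun D : comps T =>
    hS.exists_mem_comps_forall_dist_le_mem hε hTS D.2
  have hgf : ∀ C, g ⟨f C, hf_mem C⟩ = C := fun C =>
    eq_of_forall_dist_le_mem hST C.2 (hg_mem _) (hf C) (hg ⟨f C, hf_mem C⟩)
  have hfg : ∀ D, f ⟨g D, hg_mem D⟩ = D := fun D =>
    eq_of_forall_dist_le_mem hTS D.2 (hf_mem _) (hg D) (hf ⟨g D, hg_mem D⟩)
  refine ⟨⟨fun C => ⟨f C, hf_mem C⟩, fun D => ⟨g D, hg_mem D⟩,
    fun C => Subtype.ext (hgf C), fun D => Subtype.ext (hfg D)⟩, fun C => ?_⟩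
  refine hausdorffDist_le_of_mem_dist hε0 (fun x hx => ?_) (fun y hy => ?_)
  · obtain ⟨y, hy, hxy⟩ := hST x (subset_of_mem_comps C.2 hx)
    exact ⟨y, hf C x hx y hy hxy, hxy⟩
  · obtain ⟨x, hx, hyx⟩ := hTS y (subset_of_mem_comps (hf_mem C) hy)
    exact ⟨x, hgf C ▸ hg _ y hy x hx hyx, hyx⟩

end ComponentMatching

lemma exists_dist_le_hausdorffDist_of_mem {E : Type*} [PseudoMetricSpace E] {s t : Set E} {x : E}
    (hx : x ∈ s) (ht : IsCompact t) (hne : t.Nonempty) (fin : hausdorffEDist s t ≠ ⊤) :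
    ∃ y ∈ t, dist x y ≤ hausdorffDist s t := by
  obtain ⟨y, hy, hxy⟩ := ht.exists_infDist_eq_dist hne x
  exact ⟨y, hy, hxy ▸ infDist_le_hausdorffDist_of_mem hx fin⟩

theorem stmt15_general (N : ℕ) (δ : ℝ) (hδ : 0 < δ)
    (A : ℕ → Set (EuclideanSpace ℝ (Fin N))) (A' : Set (EuclideanSpace ℝ (Fin N)))
    (hAk : ∀ k, IsCompact (A k)) (hAkne : ∀ k, (A k).Nonempty)
    (hA' : IsCompact A') (hA'ne : A'.Nonempty)
    (hconv : Filter.Tendsto (fun k => hausdorffDist (A k) A') Filter.atTop (nhds 0))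
    (hsepk : ∀ k, ∀ C ∈ comps (A k), ∀ C' ∈ comps (A k), ∀ z,
      (C ∩ ball z (δ / 2)).Nonempty → (C' ∩ ball z (δ / 2)).Nonempty → C = C')
    (hsep' : ∀ C ∈ comps A', ∀ C' ∈ comps A', ∀ z,
      (C ∩ ball z (δ / 2)).Nonempty → (C' ∩ ball z (δ / 2)).Nonempty → C = C') :
    ∃ K : ℕ, ∀ k ≥ K, ∃ f : comps (A k) ≃ comps A',
      ∀ C : comps (A k),
        hausdorffDist (C : Set (EuclideanSpace ℝ (Fin N))) ((f C : Set (EuclideanSpace ℝ (Fin N)))) ≤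
          hausdorffDist (A k) A' + δ / 4 := by
  obtain ⟨K, hK⟩ :=
    Filter.eventually_atTop.1 (hconv.eventually_lt_const (by linarith : 0 < δ / 4))
  refine ⟨K, fun k hk => ?_⟩
  have fin : hausdorffEDist (A k) A' ≠ ⊤ :=
    hausdorffEDist_ne_top_of_nonempty_of_bounded (hAkne k) hA'ne
      (hAk k).isBounded hA'.isBounded
  have hAA' : ∀ x ∈ A k, ∃ y ∈ A', dist x y ≤ hausdorffDist (A k) A' := fun x hx =>
    exists_dist_le_hausdorffDist_of_mem hx hA' hA'ne fin
  have hA'A : ∀ y ∈ A', ∃ x ∈ A k, dist y x ≤ hausdorffDist (A k) A' := fun y hy => by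
    rw [hausdorffDist_comm]
    exact exists_dist_le_hausdorffDist_of_mem hy (hAk k) (hAkne k)
      (by rwa [hausdorffEDist_comm])
  obtain ⟨e, he⟩ := exists_equiv_comps_hausdorffDist_le (hsepk k) hsep' hausdorffDist_nonneg
    ((hK k hk).trans (by linarith)) hAA' hA'A
  exact ⟨e, fun C => (he C).trans (by linarith)⟩

/-- Component matching under Hausdorff convergence: if compact sets A_k → A in
Hausdorff distance inside a fixed ball, and the connected components of each set
are uniformly δ-separated (at most one component meets any ball of radius δ/2),
then eventually the components of A_k and A are in bijection, matched components
being Hausdorff-close within d_H(A_k, A) + δ/4. -/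
theorem stmt15 (N : ℕ) (R δ : ℝ) (hR : 0 < R) (hδ : 0 < δ)
    (A : ℕ → Set (EuclideanSpace ℝ (Fin N))) (A' : Set (EuclideanSpace ℝ (Fin N)))
    (hAk : ∀ k, IsCompact (A k)) (hAkne : ∀ k, (A k).Nonempty)
    (hA' : IsCompact A') (hA'ne : A'.Nonempty)
    (hAkball : ∀ k, A k ⊆ closedBall (0 : EuclideanSpace ℝ (Fin N)) R)
    (hA'ball : A' ⊆ closedBall (0 : EuclideanSpace ℝ (Fin N)) R)
    (hconv : Filter.Tendsto (fun k => hausdorffDist (A k) A') Filter.atTop (nhds 0))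
    (hsepk : ∀ k, ∀ C ∈ comps (A k), ∀ C' ∈ comps (A k), ∀ z,
      (C ∩ ball z (δ / 2)).Nonempty → (C' ∩ ball z (δ / 2)).Nonempty → C = C')
    (hsep' : ∀ C ∈ comps A', ∀ C' ∈ comps A', ∀ z,
      (C ∩ ball z (δ / 2)).Nonempty → (C' ∩ ball z (δ / 2)).Nonempty → C = C') :
    ∃ K : ℕ, ∀ k ≥ K, ∃ f : comps (A k) ≃ comps A',
      ∀ C : comps (A k),
        hausdorffDist (C : Set (EuclideanSpace ℝ (Fin N))) ((f C : Set (EuclideanSpace ℝ (Fin N)))) ≤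
          hausdorffDist (A k) A' + δ / 4 :=
  stmt15_general N δ hδ A A' hAk hAkne hA' hA'ne hconv hsepk hsep'
end

section
/- Let d_G be the weighted word metric on ℤ^n determined by a symmetric generating set V = {v_1, ..., v_m} with weights ℓ_i = F(v_i) for a norm F on ℝ^n, and let F_V(x) = inf{Σ_i |a_i| ℓ_i : x = Σ_i a_i v_i, a_i ∈ ℝ} be the associated polyhedral norm. Then for all p, q ∈ ℤ^n, d_G(p, q) ≥ F_V(q - p), and there is a constant C (depending only on V and the ℓ_i) such that d_G(p, q) ≤ F_V(q - p) + C for all p, q ∈ ℤ^n. -/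
open Set

/-- Comparison of the integer weighted word metric d_G on ℤ^n with the
polyhedral norm F_V (real coefficients): F_V(q-p) ≤ d_G(p,q), and
d_G(p,q) ≤ F_V(q-p) + C for a constant C depending only on V and the weights. -/
theorem stmt18 (n m : ℕ) (F : (Fin n → ℝ) → ℝ)
    (hF0 : ∀ x, F x = 0 ↔ x = 0) (hFs : ∀ (a : ℝ) x, F (a • x) = |a| * F x)
    (hFa : ∀ x y, F (x + y) ≤ F x + F y)
    (v : Fin m → (Fin n → ℤ))
    (hsymm : ∀ i, ∃ j, v j = -v i)
    (hgen : ∀ p : Fin n → ℤ, ∃ a : Fin m → ℤ, p = ∑ i, a i • v i)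
    (ℓ : Fin m → ℝ) (hℓ : ∀ i, ℓ i = F (fun k => ((v i k : ℝ))))
    (hℓpos : ∀ i, 0 < ℓ i)
    (dG : (Fin n → ℤ) → (Fin n → ℤ) → ℝ)
    (hdG : ∀ p q, dG p q = sInf {s : ℝ | ∃ a : Fin m → ℤ,
      q - p = ∑ i, a i • v i ∧ s = ∑ i, (|a i| : ℝ) * ℓ i})
    (FV : (Fin n → ℝ) → ℝ)
    (hFV : ∀ x, FV x = sInf {s : ℝ | ∃ a : Fin m → ℝ,
      x = ∑ i, a i • (fun k => ((v i k : ℝ))) ∧ s = ∑ i, |a i| * ℓ i}) :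
    (∀ p q : Fin n → ℤ, FV (fun k => (((q - p) k : ℝ))) ≤ dG p q) ∧
    (∃ C : ℝ, ∀ p q : Fin n → ℤ, dG p q ≤ FV (fun k => (((q - p) k : ℝ))) + C) := by
  -- casting lemma
  have hcast : ∀ (a : Fin m → ℤ) (k : Fin n),
      (((∑ i, a i • v i) k : ℤ) : ℝ) = ∑ i, (a i : ℝ) * ((v i k : ℤ) : ℝ) := by
    intro a k
    rw [Finset.sum_apply]
    push_cast [Pi.smul_apply, smul_eq_mul]
    rfl
  have hbdS : ∀ p q : Fin n → ℤ, BddBelow {s : ℝ | ∃ a : Fin m → ℤ,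
      q - p = ∑ i, a i • v i ∧ s = ∑ i, (|a i| : ℝ) * ℓ i} := by
    intro p q
    refine ⟨0, ?_⟩
    rintro s ⟨a, -, rfl⟩
    apply Finset.sum_nonneg
    intro i _
    have := (hℓpos i).le
    positivity
  have hbdR : ∀ x : Fin n → ℝ, BddBelow {s : ℝ | ∃ a : Fin m → ℝ,
      x = ∑ i, a i • (fun k => ((v i k : ℝ))) ∧ s = ∑ i, |a i| * ℓ i} := by
    intro x
    refine ⟨0, ?_⟩
    rintro s ⟨a, -, rfl⟩
    apply Finset.sum_nonneg
    intro i _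
    have := (hℓpos i).le
    positivity
  constructor
  · intro p q
    rw [hdG, hFV]
    apply csInf_le_csInf (hbdR _)
    · obtain ⟨a, ha⟩ := hgen (q - p)
      exact ⟨_, a, ha, rfl⟩
    · rintro s ⟨a, ha, rfl⟩
      refine ⟨fun i => (a i : ℝ), ?_, ?_⟩
      · funext k
        have h1 := congrFun ha k
        have h2 := hcast a k
        rw [← h1] at h2
        rw [h2, Finset.sum_apply]
        simp [Pi.smul_apply, smul_eq_mul]
      · push_cast
        rfl
  · -- the additive error bound
    choose crep hcrep using hgen
    set M : Fin n → ℤ := fun k => ∑ i, |v i k| with hM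
    set S : Finset (Fin n → ℤ) := Fintype.piFinset fun k => Finset.Icc (-(M k)) (M k)
      with hS
    have hMnn : ∀ k, 0 ≤ M k := fun k => Finset.sum_nonneg fun i _ => abs_nonneg _
    have hSne : S.Nonempty := by
      refine ⟨0, ?_⟩
      rw [hS, Fintype.mem_piFinset]
      intro k
      simp only [Pi.zero_apply, Finset.mem_Icc]
      constructor
      · linarith [hMnn k]
      · exact hMnn k
    set C : ℝ := (∑ i, ℓ i) + S.sup' hSne (fun r => ∑ i, (|crep r i| : ℝ) * ℓ i)
      with hC
    refine ⟨C, fun p q => ?_⟩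
    have key : ∀ s ∈ {s : ℝ | ∃ a : Fin m → ℝ,
        (fun k => (((q - p) k : ℤ) : ℝ)) = ∑ i, a i • (fun k => ((v i k : ℝ)))
        ∧ s = ∑ i, |a i| * ℓ i}, dG p q - C ≤ s := by
      rintro s ⟨a, ha, rfl⟩
      -- round coefficients
      set b : Fin m → ℤ := fun i => ⌊a i⌋ with hb
      set r : Fin n → ℤ := (q - p) - ∑ i, b i • v i with hr
      have hrk : ∀ k, ((r k : ℤ) : ℝ) = ∑ i, (a i - (b i : ℝ)) * ((v i k : ℤ) : ℝ) := by
        intro k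
        have h1 : (((q - p) k : ℤ) : ℝ) = ∑ i, a i * ((v i k : ℤ) : ℝ) := by
          have := congrFun ha k
          rw [this, Finset.sum_apply]
          simp [Pi.smul_apply, smul_eq_mul]
        have h2 := hcast b k
        have h3 : r k = (q - p) k - (∑ i, b i • v i) k := rfl
        rw [h3, Int.cast_sub, h2, h1, ← Finset.sum_sub_distrib]
        apply Finset.sum_congr rfl
        intro i _
        ring
      have hrS : r ∈ S := by
        rw [hS, Fintype.mem_piFinset]
        intro k
        rw [Finset.mem_Icc]
        have habs : |((r k : ℤ) : ℝ)| ≤ ((M k : ℤ) : ℝ) := by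
          rw [hrk k]
          calc |∑ i, (a i - (b i : ℝ)) * ((v i k : ℤ) : ℝ)|
              ≤ ∑ i, |(a i - (b i : ℝ)) * ((v i k : ℤ) : ℝ)| := Finset.abs_sum_le_sum_abs _ _
            _ ≤ ∑ i, |((v i k : ℤ) : ℝ)| := by
                apply Finset.sum_le_sum
                intro i _
                rw [abs_mul]
                have h1 : |a i - (b i : ℝ)| ≤ 1 := by
                  rw [abs_le]
                  constructor
                  · have := Int.floor_le (a i); simp only [hb]; linarith
                  · have := Int.lt_floor_add_one (a i); simp only [hb]; linarith
                calc |a i - (b i : ℝ)| * |((v i k : ℤ) : ℝ)|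
                    ≤ 1 * |((v i k : ℤ) : ℝ)| := by
                      apply mul_le_mul_of_nonneg_right h1 (abs_nonneg _)
                  _ = |((v i k : ℤ) : ℝ)| := one_mul _
            _ = ((M k : ℤ) : ℝ) := by simp [hM]
        rw [← Int.cast_abs] at habs
        have : |r k| ≤ M k := by exact_mod_cast habs
        exact abs_le.mp this
      set c : Fin m → ℤ := crep r with hc
      have hrc : r = ∑ i, c i • v i := hcrep r
      have hrep : q - p = ∑ i, (b i + c i) • v i := by
        have : q - p = (∑ i, b i • v i) + r := by rw [hr]; abel
        rw [this, hrc, ← Finset.sum_add_distrib]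
        apply Finset.sum_congr rfl
        intro i _
        rw [add_smul]
      have hdle : dG p q ≤ ∑ i, (|b i + c i| : ℝ) * ℓ i := by
        rw [hdG]
        refine csInf_le (hbdS p q) ⟨b + c, hrep, ?_⟩
        apply Finset.sum_congr rfl
        intro i _
        simp [Pi.add_apply]
      have hstep : ∑ i, (|b i + c i| : ℝ) * ℓ i
          ≤ (∑ i, |a i| * ℓ i) + C := by
        have h1 : ∀ i, (|b i + c i| : ℝ) * ℓ i
            ≤ (|a i| + 1) * ℓ i + (|c i| : ℝ) * ℓ i := by
          intro i
          have hbb : (|b i| : ℝ) ≤ |a i| + 1 := by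
            rw [abs_le]
            constructor
            · have h2 := Int.lt_floor_add_one (a i)
              have h3 : -|a i| ≤ a i := neg_abs_le _
              simp only [hb]; linarith
            · have h2 := Int.floor_le (a i)
              have h3 : a i ≤ |a i| := le_abs_self _
              simp only [hb]; linarith
          have htri : |(b i : ℝ) + (c i : ℝ)| ≤ |(b i : ℝ)| + |(c i : ℝ)| := abs_add_le _ _
          nlinarith [(hℓpos i).le, abs_nonneg (a i), abs_nonneg ((c i : ℝ))]
        calc ∑ i, (|b i + c i| : ℝ) * ℓ i
            ≤ ∑ i, ((|a i| + 1) * ℓ i + (|c i| : ℝ) * ℓ i) :=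
              Finset.sum_le_sum fun i _ => h1 i
          _ = (∑ i, |a i| * ℓ i) + (∑ i, ℓ i) + (∑ i, (|c i| : ℝ) * ℓ i) := by
              rw [Finset.sum_add_distrib]
              congr 1
              rw [← Finset.sum_add_distrib]
              apply Finset.sum_congr rfl
              intro i _
              ring
          _ ≤ (∑ i, |a i| * ℓ i) + C := by
              rw [hC]
              have := Finset.le_sup' (fun r => ∑ i, (|crep r i| : ℝ) * ℓ i) hrS
              simp only [hc]
              linarith
      linarith [hdle.trans hstep]
    have hne : {s : ℝ | ∃ a : Fin m → ℝ,
        (fun k => (((q - p) k : ℤ) : ℝ)) = ∑ i, a i • (fun k => ((v i k : ℝ)))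
        ∧ s = ∑ i, |a i| * ℓ i}.Nonempty := by
      set a := crep (q - p) with haa
      have ha := hcrep (q - p)
      refine ⟨∑ i, |(a i : ℝ)| * ℓ i, fun i => (a i : ℝ), ?_, rfl⟩
      funext k
      have h2 := hcast a k
      rw [← ha] at h2
      rw [h2, Finset.sum_apply]
      simp [Pi.smul_apply, smul_eq_mul]
    have : dG p q - C ≤ FV (fun k => (((q - p) k : ℤ) : ℝ)) := by
      rw [hFV]
      exact le_csInf hne key
    linarith
end

section
/- Let (X, d) be a metric space, x₀ ∈ X, and suppose for every r > 0 the closed ball B̄_r(x₀) is compact and that there exists a norm F on ℝ^n and constant K with a surjection π : ℝ^n → X satisfying |d(π(v), π(w)) - F(v - w)| ≤ K for all v, w ∈ ℝ^n. Then for any two sequences of scales r_j → ∞ and s_j → ∞, the pointed Gromov–Hausdorff limits of (X, d/r_j, x₀) and (X, d/s_j, x₀) coincide (both equal (ℝ^n, d_F, 0) with d_F(x,y) = F(x - y)); i.e., the tangent cone at infinity is unique. -/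
/-!
Fix a right inverse `σ` of `π`. Rescaling by `r` turns the comparison `|d(π v, π w) - F(v - w)| ≤ K`
into the same comparison for `d / r` and `v ↦ π (r • v)` with error `K / r`, and any comparison with
a small error `δ` yields a `2δ`-isometry `a ↦ σ a - σ x₀` between closed balls. As `K / r → 0`,
every sequence of scales tending to infinity gives the same limit `(ℝⁿ, F)`.
-/

open Filter

/-- `ApproxIsometryBalls d1 x d2 y R ε`: there is an ε-isometry between the closed
R-balls of the pointed pseudometric spaces `(α, d1, x)` and `(β, d2, y)`. -/
def ApproxIsometryBalls {α β : Type*} (d1 : α → α → ℝ) (x : α)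
    (d2 : β → β → ℝ) (y : β) (R ε : ℝ) : Prop :=
  ∃ f : α → β, f x = y ∧
    (∀ a b, d1 x a ≤ R → d1 x b ≤ R → |d1 a b - d2 (f a) (f b)| ≤ ε) ∧
    (∀ b, d2 y b ≤ R → ∃ a, d1 x a ≤ R ∧ d2 (f a) b ≤ ε)

/-- Pointed Gromov–Hausdorff convergence of a sequence of pseudometrics `d j` with
basepoint `x` to `(β, dlim, y)`: for every radius and tolerance, eventually the
closed balls admit ε-isometries. -/
def PGHTendsto {α β : Type*} (d : ℕ → α → α → ℝ) (x : α)
    (dlim : β → β → ℝ) (y : β) : Prop :=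
  ∀ R > 0, ∀ ε > 0, ∀ᶠ j in atTop, ApproxIsometryBalls (d j) x dlim y R ε

open Function

namespace Seminorm

variable {E : Type*} [AddCommGroup E] [Module ℝ E] (p : Seminorm ℝ E)

/-- Radially shrinking `b` by the factor `(R - δ) / R` moves it by at most `δ`. -/
theorem exists_apply_le_sub_and_apply_sub_le {b : E} {R δ : ℝ} (hδ : 0 ≤ δ) (hδR : δ < R)
    (hb : p b ≤ R) : ∃ v, p v ≤ R - δ ∧ p (v - b) ≤ δ := by
  have hR : 0 < R := hδ.trans_lt hδR
  refine ⟨((R - δ) / R) • b, ?_, ?_⟩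
  · rw [map_smul_eq_mul, Real.norm_of_nonneg (div_nonneg (by linarith) hR.le)]
    calc (R - δ) / R * p b ≤ (R - δ) / R * R := by gcongr
      _ = R - δ := div_mul_cancel₀ _ hR.ne'
  · have hcoef : (R - δ) / R - 1 = -(δ / R) := by field_simp; ring
    rw [show ((R - δ) / R) • b - b = ((R - δ) / R - 1) • b by rw [sub_smul, one_smul], hcoef,
      map_smul_eq_mul, norm_neg, Real.norm_of_nonneg (div_nonneg hδ hR.le)]
    calc δ / R * p b ≤ δ / R * R := by gcongr
      _ = δ := by field_simp

end Seminorm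

section Comparison

variable {E X : Type*} [AddCommGroup E] [Module ℝ E] (p : Seminorm ℝ E)

theorem approxIsometryBalls_of_abs_sub_le {d : X → X → ℝ} (hd : ∀ a, d a a = 0) {π : E → X}
    (hπ : Surjective π) {δ R ε : ℝ} (hcomp : ∀ v w, |d (π v) (π w) - p (v - w)| ≤ δ)
    (hδR : δ < R) (hδε : 2 * δ ≤ ε) (x₀ : X) :
    ApproxIsometryBalls d x₀ (fun v w => p (v - w)) 0 R ε := by
  set σ := surjInv hπ
  have hπσ : ∀ a, π (σ a) = a := surjInv_eq hπ
  have hδ : 0 ≤ δ := (abs_nonneg _).trans (hcomp 0 0)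
  refine ⟨fun a => σ a - σ x₀, sub_self _, fun a b _ _ => ?_, fun b hb => ?_⟩
  · simpa only [sub_sub_sub_cancel_right, hπσ] using (hcomp (σ a) (σ b)).trans (by linarith)
  · simp only [zero_sub, map_neg_eq_map] at hb
    obtain ⟨v, hvR, hvb⟩ := p.exists_apply_le_sub_and_apply_sub_le hδ hδR hb
    obtain ⟨u, rfl⟩ : ∃ u, v = u - σ x₀ := ⟨v + σ x₀, by abel⟩
    have hx₀ : d x₀ (π u) ≤ R := by
      have h := (abs_le.mp (hcomp (σ x₀) u)).2
      rw [hπσ, map_sub_rev] at h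
      linarith
    have hσu : p (σ (π u) - u) ≤ δ := by
      have h := (abs_le.mp (hcomp (σ (π u)) u)).1
      rw [hπσ, hd] at h
      linarith
    refine ⟨π u, hx₀, ?_⟩
    calc p (σ (π u) - σ x₀ - b) = p ((σ (π u) - u) + (u - σ x₀ - b)) := by congr 1; abel
      _ ≤ p (σ (π u) - u) + p (u - σ x₀ - b) := map_add_le_add p _ _
      _ ≤ ε := by linarith

variable [PseudoMetricSpace X] {π : E → X} {K : ℝ}

theorem abs_dist_smul_div_sub_le (hcomp : ∀ v w, |dist (π v) (π w) - p (v - w)| ≤ K) {r : ℝ}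
    (hr : 0 < r) (v w : E) : |dist (π (r • v)) (π (r • w)) / r - p (v - w)| ≤ K / r := by
  have hp : p (v - w) = p (r • v - r • w) / r := by
    rw [← smul_sub, map_smul_eq_mul, Real.norm_of_nonneg hr.le, mul_div_cancel_left₀ _ hr.ne']
  rw [hp, ← sub_div, abs_div, abs_of_pos hr]
  exact div_le_div_of_nonneg_right (hcomp _ _) hr.le

theorem pghTendsto_of_abs_dist_sub_le (hπ : Surjective π)
    (hcomp : ∀ v w, |dist (π v) (π w) - p (v - w)| ≤ K) (x₀ : X) {r : ℕ → ℝ}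
    (hr : Tendsto r atTop atTop) :
    PGHTendsto (fun j a b => dist a b / r j) x₀ (fun v w => p (v - w)) 0 := by
  intro R hR ε hε
  filter_upwards [hr.eventually_gt_atTop 0, hr.eventually_gt_atTop (K / R),
    hr.eventually_ge_atTop (2 * K / ε)] with j hj₀ hjR hjε
  have hsurj : Surjective fun v => π (r j • v) :=
    hπ.comp fun v => ⟨(r j)⁻¹ • v, smul_inv_smul₀ hj₀.ne' v⟩
  refine approxIsometryBalls_of_abs_sub_le p (fun a => by simp) hsurj
    (abs_dist_smul_div_sub_le p hcomp hj₀) ?_ ?_ x₀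
  · rw [div_lt_iff₀ hj₀]
    linarith [(div_lt_iff₀ hR).mp hjR]
  · rw [← mul_div_assoc, div_le_iff₀ hj₀]
    linarith [(div_le_iff₀ hε).mp hjε]

end Comparison

theorem stmt19_general (n : ℕ) {X : Type*} [MetricSpace X] (x₀ : X)
    (F : (Fin n → ℝ) → ℝ)
    (hFs : ∀ (a : ℝ) x, F (a • x) = |a| * F x)
    (hFa : ∀ x y, F (x + y) ≤ F x + F y)
    (K : ℝ)
    (π : (Fin n → ℝ) → X) (hsurj : Function.Surjective π)
    (hcomp : ∀ v w, |dist (π v) (π w) - F (v - w)| ≤ K)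
    (r s : ℕ → ℝ)
    (hr : Tendsto r atTop atTop) (hs : Tendsto s atTop atTop) :
    PGHTendsto (fun j a b => dist a b / r j) x₀ (fun v w => F (v - w)) (0 : Fin n → ℝ) ∧
    PGHTendsto (fun j a b => dist a b / s j) x₀ (fun v w => F (v - w)) (0 : Fin n → ℝ) := by
  let p : Seminorm ℝ (Fin n → ℝ) := .of F hFa fun a x => by rw [Real.norm_eq_abs, hFs]
  exact ⟨pghTendsto_of_abs_dist_sub_le p hsurj hcomp x₀ hr,
    pghTendsto_of_abs_dist_sub_le p hsurj hcomp x₀ hs⟩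

/-- Uniqueness of the tangent cone at infinity under uniform norm-comparability:
if a metric space X is norm-comparable to (ℝ^n, F) via a surjection π with
additive error K, then for any two sequences of scales r_j, s_j → ∞ the rescaled
pointed spaces (X, d/r_j, x₀) and (X, d/s_j, x₀) both converge in the pointed
Gromov–Hausdorff sense to (ℝ^n, d_F, 0); i.e. the tangent cone at infinity is
unique and equals (ℝ^n, F). -/
theorem stmt19 (n : ℕ) {X : Type*} [MetricSpace X] (x₀ : X)
    (hproper : ∀ r : ℝ, 0 < r → IsCompact (Metric.closedBall x₀ r))
    (F : (Fin n → ℝ) → ℝ)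
    (hF0 : ∀ x, F x = 0 ↔ x = 0) (hFs : ∀ (a : ℝ) x, F (a • x) = |a| * F x)
    (hFa : ∀ x y, F (x + y) ≤ F x + F y)
    (K : ℝ) (hK : 0 ≤ K)
    (π : (Fin n → ℝ) → X) (hsurj : Function.Surjective π)
    (hcomp : ∀ v w, |dist (π v) (π w) - F (v - w)| ≤ K)
    (r s : ℕ → ℝ) (hrpos : ∀ j, 0 < r j) (hspos : ∀ j, 0 < s j)
    (hr : Tendsto r atTop atTop) (hs : Tendsto s atTop atTop) :
    PGHTendsto (fun j a b => dist a b / r j) x₀ (fun v w => F (v - w)) (0 : Fin n → ℝ) ∧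
    PGHTendsto (fun j a b => dist a b / s j) x₀ (fun v w => F (v - w)) (0 : Fin n → ℝ) :=
  stmt19_general n x₀ F hFs hFa K π hsurj hcomp r s hr hs
end
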